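/- arXiv:2001.00158 — 2 statements merged into one kernel-verified Lean document; each statement's English description precedes it below -/
import Mathlib

section
/- Let q = 2^m with m even, and let U be the group of (q+1)-st roots of unity in GF(q^2). For any three pairwise distinct elements u1, u2, u3 of U, with s1 = u1+u2+u3 and s2 = u1u2+u2u3+u3u1, one has s1^2 + s2 ≠ 0. -/
/-!
Work in characteristic 2 and put `a = u1 + u3`, `b = u2 + u3`. Then `s1^2 + s2 = a^2 + ab + b^2`,
so its vanishing forces `a^3 = b^3`. For `q = 2^m` the conjugation `x ↦ x^q` inverts elements
of `U`, whence `a^q * u1 u3 = a` and `b^q * u2 u3 = b`. Since `m` is even, `q = 3j + 1`, so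
`(a^3)^j * u1 u3 = 1 = (b^3)^j * u2 u3`, and `a^3 = b^3` gives `u1 = u2`.
-/

theorem charP_two_of_card_eq_two_pow {F : Type*} [Field F] [Fintype F] {n : ℕ}
    (h : Fintype.card F = 2 ^ n) : CharP F 2 := by
  refine CharTwo.of_one_ne_zero_of_two_eq_zero one_ne_zero (eq_zero_of_pow_eq_zero (n := n) ?_)
  exact_mod_cast h ▸ FiniteField.cast_card_eq_zero F

theorem exists_two_pow_eq_three_mul_add_one {m : ℕ} (hm : Even m) : ∃ j, 2 ^ m = 3 * j + 1 := by
  obtain ⟨k, rfl⟩ := hm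
  have h4 : 4 ^ k % 3 = 1 := by rw [Nat.pow_mod]; norm_num
  exact ⟨4 ^ k / 3, by rw [← two_mul, pow_mul]; norm_num; omega⟩

theorem add_pow_expChar_pow_mul_mul_eq_add {R : Type*} [CommRing R] (p n : ℕ) [ExpChar R p]
    {x y : R} (hx : x ^ (p ^ n + 1) = 1) (hy : y ^ (p ^ n + 1) = 1) :
    (x + y) ^ p ^ n * (x * y) = x + y := by
  rw [add_pow_expChar_pow]
  linear_combination y * hx + x * hy

theorem sq_add_add_add_mul_add_mul_add_mul_ne_zero {F : Type*} [Field F] [CharP F 2] {m : ℕ}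
    (hm : Even m) {u1 u2 u3 : F} (h1 : u1 ^ (2 ^ m + 1) = 1) (h2 : u2 ^ (2 ^ m + 1) = 1)
    (h3 : u3 ^ (2 ^ m + 1) = 1) (h12 : u1 ≠ u2) (h13 : u1 ≠ u3) (h23 : u2 ≠ u3) :
    (u1 + u2 + u3) ^ 2 + (u1 * u2 + u2 * u3 + u3 * u1) ≠ 0 := by
  intro h0
  obtain ⟨j, hj⟩ := exists_two_pow_eq_three_mul_add_one hm
  have hcube : (u1 + u3) ^ 3 = (u2 + u3) ^ 3 := by
    linear_combination (u1 - u2) * (h0 + (u3 ^ 2 - u1 * u2) * (CharTwo.two_eq_zero : (2 : F) = 0))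
  have hcancel : ∀ {x c : F}, x ≠ 0 → x ^ 2 ^ m * c = x → (x ^ 3) ^ j * c = 1 := by
    intro x c hx h
    rw [hj, pow_succ, pow_mul] at h
    exact mul_right_cancel₀ hx (by linear_combination h)
  have e1 := hcancel (mt CharTwo.add_eq_zero.mp h13) (add_pow_expChar_pow_mul_mul_eq_add 2 m h1 h3)
  have e2 := hcancel (mt CharTwo.add_eq_zero.mp h23) (add_pow_expChar_pow_mul_mul_eq_add 2 m h2 h3)
  rw [hcube] at e1
  have hu3 : u3 ≠ 0 := by rintro rfl; simp at h3
  have hu : u1 * u3 = u2 * u3 :=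
    mul_left_cancel₀ (left_ne_zero_of_mul_eq_one e1) (e1.trans e2.symm)
  exact h12 (mul_right_cancel₀ hu3 hu)

theorem stmt_5_general (m : ℕ) (hme : Even m) (F : Type*) [Field F] [Fintype F]
    (hF : Fintype.card F = 2 ^ (2 * m))
    (u1 u2 u3 : F)
    (h1 : u1 ^ (2 ^ m + 1) = 1) (h2 : u2 ^ (2 ^ m + 1) = 1)
    (h3 : u3 ^ (2 ^ m + 1) = 1)
    (h12 : u1 ≠ u2) (h13 : u1 ≠ u3) (h23 : u2 ≠ u3) :
    (u1 + u2 + u3) ^ 2 + (u1 * u2 + u2 * u3 + u3 * u1) ≠ 0 :=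
  have := charP_two_of_card_eq_two_pow hF
  sq_add_add_add_mul_add_mul_add_mul_ne_zero hme h1 h2 h3 h12 h13 h23

/-- For `q = 2^m`, `m` even, and pairwise distinct `(q+1)`-st roots of unity
`u1, u2, u3` in `GF(q^2)`: `s1^2 + s2 ≠ 0`. -/
theorem stmt_5 (m : ℕ) (hm : 0 < m) (hme : Even m) (F : Type*) [Field F] [Fintype F]
    (hF : Fintype.card F = 2 ^ (2 * m))
    (u1 u2 u3 : F)
    (h1 : u1 ^ (2 ^ m + 1) = 1) (h2 : u2 ^ (2 ^ m + 1) = 1)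
    (h3 : u3 ^ (2 ^ m + 1) = 1)
    (h12 : u1 ≠ u2) (h13 : u1 ≠ u3) (h23 : u2 ≠ u3) :
    (u1 + u2 + u3) ^ 2 + (u1 * u2 + u2 * u3 + u3 * u1) ≠ 0 :=
  stmt_5_general m hme F hF u1 u2 u3 h1 h2 h3 h12 h13 h23
end

section
/- Let q = 2^m and let U be the group of (q+1)-st roots of unity in GF(q^2). For any four pairwise distinct elements u1, u2, u3, u4 of U and each i ∈ {1,2,3,4}, the square root of σ_{4,3}/σ_{4,1} lies in U, and (σ_{4,3} + u_i·σ_{4,2})/(σ_{4,2} + u_i·σ_{4,1}) lies in U. -/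
/-!
With `q = 2 ^ m`, the map `φ x = x ^ q` is a ring endomorphism of `F`, and `x ^ (q + 1) = 1`
says `φ x * x = 1`, i.e. `φ` inverts each `uᵢ`. Hence, with `P = σ₄`, `φ` sends `σ₁, σ₂, σ₃`
to `σ₃ / P, σ₂ / P, σ₁ / P`. So for `r = σ₃ / σ₁`, and also for `r = (σ₃ + u σ₂) / (σ₂ + u σ₁)`
since `φ u = u⁻¹`, `φ` swaps numerator and denominator up to a common factor, whence
`φ r * r = 1`. A square root `w` of `σ₃ / σ₁` then satisfies `(φ w * w) ^ 2 = 1`, hence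
`φ w * w = 1` in characteristic 2. The denominators do not vanish: otherwise the numerators
vanish too, and then a product `(a + b) (a + c) (b + c)` of three distinct `uᵢ` is zero,
while `a + b = 0` means `a = b` in characteristic 2.
-/

section

variable {F : Type*} [Field F]

theorem charP_two_of_card_eq_two_pow_s15 [Fintype F] {k : ℕ} (hF : Fintype.card F = 2 ^ k) :
    CharP F 2 := by
  obtain ⟨p, hchar, n, hp, hcard⟩ := FiniteField.card' F
  obtain rfl : p = 2 := (Nat.prime_dvd_prime_iff_eq hp Nat.prime_two).mp
    (hp.dvd_of_dvd_pow (hF ▸ hcard ▸ dvd_pow_self p n.ne_zero))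
  exact hchar

section CharTwo

variable [CharP F 2] {a b c d s1 s2 s3 : F}

theorem esymm₃_ne_zero_of_esymm₁_eq_zero (hab : a ≠ b) (hac : a ≠ c) (hbc : b ≠ c)
    (hs1 : s1 = a + b + c + d) (hs3 : s3 = a * b * c + a * b * d + a * c * d + b * c * d)
    (h1 : s1 = 0) : s3 ≠ 0 := by
  intro h3
  have : (a + b) * (a + c) * (b + c) = 0 := by
    subst hs1 hs3
    linear_combination (a * b + c * (a + b)) * h1 - h3
  simp only [mul_eq_zero, CharTwo.add_eq_zero] at this
  tauto

theorem esymm₃_add_mul_ne_zero_of_esymm₂_add_mul_eq_zero (hbc : b ≠ c) (hbd : b ≠ d)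
    (hcd : c ≠ d) (hs1 : s1 = a + b + c + d)
    (hs2 : s2 = a * b + a * c + a * d + b * c + b * d + c * d)
    (hs3 : s3 = a * b * c + a * b * d + a * c * d + b * c * d)
    (hD : s2 + a * s1 = 0) : s3 + a * s2 ≠ 0 := by
  intro hN
  rw [← CharTwo.sub_eq_add] at hD hN
  have : (b + c) * (b + d) * (c + d) = 0 := by
    subst hs1 hs2 hs3
    linear_combination (b + c + d) * hD - hN
  simp only [mul_eq_zero, CharTwo.add_eq_zero] at this
  tauto

theorem esymm₂_add_mul_ne_zero_of_mem (hab : a ≠ b) (hac : a ≠ c) (had : a ≠ d) (hbc : b ≠ c)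
    (hbd : b ≠ d) (hcd : c ≠ d) (hs1 : s1 = a + b + c + d)
    (hs2 : s2 = a * b + a * c + a * d + b * c + b * d + c * d)
    (hs3 : s3 = a * b * c + a * b * d + a * c * d + b * c * d) {u : F}
    (hu : u ∈ ({a, b, c, d} : Set F)) (hDN : s2 + u * s1 = 0 → s3 + u * s2 = 0) :
    s2 + u * s1 ≠ 0 := by
  intro hD
  refine absurd (hDN hD) ?_
  obtain rfl | rfl | rfl | rfl := hu
  · exact esymm₃_add_mul_ne_zero_of_esymm₂_add_mul_eq_zero hbc hbd hcd hs1 hs2 hs3 hD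
  · exact esymm₃_add_mul_ne_zero_of_esymm₂_add_mul_eq_zero hac had hcd
      (by rw [hs1]; ring) (by rw [hs2]; ring) (by rw [hs3]; ring) hD
  · exact esymm₃_add_mul_ne_zero_of_esymm₂_add_mul_eq_zero hab had hbd
      (by rw [hs1]; ring) (by rw [hs2]; ring) (by rw [hs3]; ring) hD
  · exact esymm₃_add_mul_ne_zero_of_esymm₂_add_mul_eq_zero hab hac hbc
      (by rw [hs1]; ring) (by rw [hs2]; ring) (by rw [hs3]; ring) hD

end CharTwo

section Conjugation

variable (φ : F →+* F) {a b c d s1 s2 s3 : F}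

theorem map_esymm_mul_prod (ha : φ a * a = 1) (hb : φ b * b = 1) (hc : φ c * c = 1)
    (hd : φ d * d = 1) (hs1 : s1 = a + b + c + d)
    (hs2 : s2 = a * b + a * c + a * d + b * c + b * d + c * d)
    (hs3 : s3 = a * b * c + a * b * d + a * c * d + b * c * d) :
    φ s1 * (a * b * c * d) = s3 ∧ φ s2 * (a * b * c * d) = s2 ∧
      φ s3 * (a * b * c * d) = s1 := by
  subst hs1 hs2 hs3
  have := right_ne_zero_of_mul_eq_one ha
  have := right_ne_zero_of_mul_eq_one hb
  have := right_ne_zero_of_mul_eq_one hc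
  have := right_ne_zero_of_mul_eq_one hd
  simp only [map_add, map_mul, eq_inv_of_mul_eq_one_left ha, eq_inv_of_mul_eq_one_left hb,
    eq_inv_of_mul_eq_one_left hc, eq_inv_of_mul_eq_one_left hd]
  refine ⟨?_, ?_, ?_⟩ <;> field_simp <;> ring

theorem map_add_mul_mul {u : F} (hu : φ u * u = 1) (x y p : F) :
    φ (x + u * y) * (u * p) = u * (φ x * p) + φ y * p := by
  rw [map_add, map_mul]
  linear_combination (φ y * p) * hu

theorem map_div_mul_div_eq_one {p x y : F} (hp : p ≠ 0) (hx : x ≠ 0) (hxy : φ x * p = y)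
    (hyx : φ y * p = x) : φ (y / x) * (y / x) = 1 := by
  rw [map_div₀, div_mul_div_comm, div_eq_one_iff_eq (mul_ne_zero ((map_ne_zero φ).2 hx) hx)]
  refine mul_right_cancel₀ hp ?_
  linear_combination y * hyx - x * hxy

end Conjugation

end

theorem stmt_15_general (m : ℕ) (F : Type*) [Field F] [Fintype F]
    (hF : Fintype.card F = 2 ^ (2 * m))
    (u1 u2 u3 u4 : F)
    (h1 : u1 ^ (2 ^ m + 1) = 1) (h2 : u2 ^ (2 ^ m + 1) = 1)
    (h3 : u3 ^ (2 ^ m + 1) = 1) (h4 : u4 ^ (2 ^ m + 1) = 1)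
    (h12 : u1 ≠ u2) (h13 : u1 ≠ u3) (h14 : u1 ≠ u4)
    (h23 : u2 ≠ u3) (h24 : u2 ≠ u4) (h34 : u3 ≠ u4)
    (s1 s2 s3 : F)
    (hs1 : s1 = u1 + u2 + u3 + u4)
    (hs2 : s2 = u1 * u2 + u1 * u3 + u1 * u4 + u2 * u3 + u2 * u4 + u3 * u4)
    (hs3 : s3 = u1 * u2 * u3 + u1 * u2 * u4 + u1 * u3 * u4 + u2 * u3 * u4) :
    (∀ w : F, w ^ 2 = s3 / s1 → w ^ (2 ^ m + 1) = 1) ∧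
    ∀ u ∈ ({u1, u2, u3, u4} : Set F),
      ((s3 + u * s2) / (s2 + u * s1)) ^ (2 ^ m + 1) = 1 := by
  have := charP_two_of_card_eq_two_pow_s15 hF
  set φ := iterateFrobenius F 2 m
  have hφ : ∀ x : F, x ^ (2 ^ m + 1) = φ x * x := fun x => pow_succ x _
  simp only [hφ] at h1 h2 h3 h4 ⊢
  have hP : u1 * u2 * u3 * u4 ≠ 0 :=
    mul_ne_zero (mul_ne_zero (mul_ne_zero (right_ne_zero_of_mul_eq_one h1)
      (right_ne_zero_of_mul_eq_one h2)) (right_ne_zero_of_mul_eq_one h3))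
      (right_ne_zero_of_mul_eq_one h4)
  obtain ⟨hA, hB, hC⟩ := map_esymm_mul_prod φ h1 h2 h3 h4 hs1 hs2 hs3
  constructor
  · intro w hw
    have hs1_ne : s1 ≠ 0 := fun h => esymm₃_ne_zero_of_esymm₁_eq_zero h12 h13 h23 hs1 hs3 h
      (by rw [← hA, h, map_zero, zero_mul])
    rw [← CharTwo.sq_inj, one_pow, mul_pow, ← map_pow, hw]
    exact map_div_mul_div_eq_one φ hP hs1_ne hA hC
  · intro u hu
    have hu1 : φ u * u = 1 := by obtain rfl | rfl | rfl | rfl := hu <;> assumption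
    have hDN : φ (s2 + u * s1) * (u * (u1 * u2 * u3 * u4)) = s3 + u * s2 := by
      rw [map_add_mul_mul φ hu1, hB, hA, add_comm]
    have hND : φ (s3 + u * s2) * (u * (u1 * u2 * u3 * u4)) = s2 + u * s1 := by
      rw [map_add_mul_mul φ hu1, hC, hB, add_comm]
    have hD := esymm₂_add_mul_ne_zero_of_mem h12 h13 h14 h23 h24 h34 hs1 hs2 hs3 hu
      (fun hD => by rw [← hDN, hD, map_zero, zero_mul])
    exact map_div_mul_div_eq_one φ (mul_ne_zero (right_ne_zero_of_mul_eq_one hu1) hP) hD hDN hND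

/-- For four pairwise distinct `(q+1)`-st roots of unity `u1, u2, u3, u4` in `GF(q^2)`,
`q = 2^m`: the square root of `σ_{4,3}/σ_{4,1}` lies in `U_{q+1}`, and for each
`u ∈ {u1,u2,u3,u4}`, `(σ_{4,3} + u·σ_{4,2})/(σ_{4,2} + u·σ_{4,1})` lies in `U_{q+1}`. -/
theorem stmt_15 (m : ℕ) (hm : 0 < m) (F : Type*) [Field F] [Fintype F]
    (hF : Fintype.card F = 2 ^ (2 * m))
    (u1 u2 u3 u4 : F)
    (h1 : u1 ^ (2 ^ m + 1) = 1) (h2 : u2 ^ (2 ^ m + 1) = 1)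
    (h3 : u3 ^ (2 ^ m + 1) = 1) (h4 : u4 ^ (2 ^ m + 1) = 1)
    (h12 : u1 ≠ u2) (h13 : u1 ≠ u3) (h14 : u1 ≠ u4)
    (h23 : u2 ≠ u3) (h24 : u2 ≠ u4) (h34 : u3 ≠ u4)
    (s1 s2 s3 : F)
    (hs1 : s1 = u1 + u2 + u3 + u4)
    (hs2 : s2 = u1 * u2 + u1 * u3 + u1 * u4 + u2 * u3 + u2 * u4 + u3 * u4)
    (hs3 : s3 = u1 * u2 * u3 + u1 * u2 * u4 + u1 * u3 * u4 + u2 * u3 * u4) :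
    (∀ w : F, w ^ 2 = s3 / s1 → w ^ (2 ^ m + 1) = 1) ∧
    ∀ u ∈ ({u1, u2, u3, u4} : Set F),
      ((s3 + u * s2) / (s2 + u * s1)) ^ (2 ^ m + 1) = 1 :=
  stmt_15_general m F hF u1 u2 u3 u4 h1 h2 h3 h4 h12 h13 h14 h23 h24 h34 s1 s2 s3 hs1 hs2 hs3
end
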